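/- Let q and λ be reals with 0 < λ < q ≤ 1, let K ≥ 1 be an integer, let B_1, ..., B_K be nonnegative reals with Σ_{k=1}^{K} B_k = 1, and let W_RE = λ(1−q)/(q(q−λ)). Then (W_RE + (Σ_{k=1}^{K} B_k · k · (k+1))/(2q)) / (W_RE + 1/q) ≤ (q−λ)K(K+1)/(2q(1−λ)) + λ(1−q)/(q(1−λ)). That is, the delay of random linear coding over an infinite field is at most this factor worse than the delay of retransmission. -/

import Mathlib

/-! Since `W_RE + 1/q = (1 - λ)/(q - λ)`, the delay ratio is an affine, increasing function of
`Σ B_k k (k+1)`; this weighted average of `k (k+1)` is at most `K (K+1)`, and the bound is the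
value of that function there. -/

open Finset

theorem Finset.sum_mul_le_of_sum_eq_one {ι : Type*} {s : Finset ι} {w f : ι → ℝ} {M : ℝ}
    (hw : ∀ i ∈ s, 0 ≤ w i) (hws : ∑ i ∈ s, w i = 1) (hf : ∀ i ∈ s, f i ≤ M) :
    ∑ i ∈ s, w i * f i ≤ M :=
  calc ∑ i ∈ s, w i * f i ≤ ∑ i ∈ s, w i * M :=
        sum_le_sum fun i hi => mul_le_mul_of_nonneg_left (hf i hi) (hw i hi)
    _ = M := by rw [← sum_mul, hws, one_mul]

theorem Nat.cast_mul_succ_le_cast_mul_succ {k K : ℕ} (h : k ≤ K) :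
    (k : ℝ) * (k + 1) ≤ K * (K + 1) := by
  have h' : (k : ℝ) ≤ K := by exact_mod_cast h
  gcongr

theorem retransmission_delay_eq {q lam : ℝ} (hq : q ≠ 0) (hlamq : lam ≠ q) :
    lam * (1 - q) / (q * (q - lam)) + 1 / q = (1 - lam) / (q - lam) := by
  have : q - lam ≠ 0 := sub_ne_zero.mpr hlamq.symm
  field_simp
  ring

theorem rlc_delay_ratio_eq {q lam : ℝ} (hq : q ≠ 0) (hlamq : lam ≠ q) (hlam1 : lam ≠ 1)
    (S : ℝ) :
    (lam * (1 - q) / (q * (q - lam)) + S / (2 * q)) / (lam * (1 - q) / (q * (q - lam)) + 1 / q)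
      = (q - lam) * S / (2 * q * (1 - lam)) + lam * (1 - q) / (q * (1 - lam)) := by
  have : q - lam ≠ 0 := sub_ne_zero.mpr hlamq.symm
  have : 1 - lam ≠ 0 := sub_ne_zero.mpr hlam1.symm
  rw [retransmission_delay_eq hq hlamq]
  field_simp
  ring

theorem rlc_delay_ratio_upper_bound_general (q lam : ℝ) (hlam : 0 < lam)
    (hlamq : lam < q) (hq : q ≤ 1) (K : ℕ) (B : ℕ → ℝ)
    (hBnonneg : ∀ k ∈ Finset.Icc 1 K, 0 ≤ B k)
    (hBsum : ∑ k ∈ Finset.Icc 1 K, B k = 1) :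
    (lam * (1 - q) / (q * (q - lam)) +
        (∑ k ∈ Finset.Icc 1 K, B k * (k : ℝ) * ((k : ℝ) + 1)) / (2 * q)) /
      (lam * (1 - q) / (q * (q - lam)) + 1 / q)
    ≤ (q - lam) * (K : ℝ) * ((K : ℝ) + 1) / (2 * q * (1 - lam)) +
        lam * (1 - q) / (q * (1 - lam)) := by
  have hq0 : 0 < q := hlam.trans hlamq
  have hlam1 : lam < 1 := hlamq.trans_le hq
  have hmean : ∑ k ∈ Icc 1 K, B k * (k : ℝ) * ((k : ℝ) + 1) ≤ (K : ℝ) * ((K : ℝ) + 1) := by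
    simp_rw [mul_assoc]
    exact sum_mul_le_of_sum_eq_one hBnonneg hBsum fun k hk =>
      Nat.cast_mul_succ_le_cast_mul_succ (mem_Icc.mp hk).2
  rw [rlc_delay_ratio_eq hq0.ne' hlamq.ne hlam1.ne, mul_assoc (q - lam)]
  have : 0 < 1 - lam := by linarith
  have : 0 ≤ q - lam := by linarith
  gcongr

/-- The delay of random linear coding over an infinite field is at most a
factor `(q−λ)K(K+1)/(2q(1−λ)) + λ(1−q)/(q(1−λ))` worse than the delay of
retransmission. -/
theorem rlc_delay_ratio_upper_bound (q lam : ℝ) (hlam : 0 < lam)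
    (hlamq : lam < q) (hq : q ≤ 1) (K : ℕ) (hK : 1 ≤ K) (B : ℕ → ℝ)
    (hBnonneg : ∀ k ∈ Finset.Icc 1 K, 0 ≤ B k)
    (hBsum : ∑ k ∈ Finset.Icc 1 K, B k = 1) :
    (lam * (1 - q) / (q * (q - lam)) +
        (∑ k ∈ Finset.Icc 1 K, B k * (k : ℝ) * ((k : ℝ) + 1)) / (2 * q)) /
      (lam * (1 - q) / (q * (q - lam)) + 1 / q)
    ≤ (q - lam) * (K : ℝ) * ((K : ℝ) + 1) / (2 * q * (1 - lam)) +
        lam * (1 - q) / (q * (1 - lam)) :=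
  rlc_delay_ratio_upper_bound_general q lam hlam hlamq hq K B hBnonneg hBsum
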